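/- arXiv:2106.05243 — 6 statements merged into one kernel-verified Lean document; each statement's English description precedes it below -/
import Mathlib

section
/- Let A be a compact self-adjoint operator on a separable Hilbert space H, and suppose A = B + E where B is a bounded operator of finite rank r and E is a bounded operator with operator norm strictly less than ε. Then the number of eigenvalues of A (counted with multiplicity) whose absolute value is at least ε is at most r. -/
/-!
On the span `W` of the eigenspaces of `A` for eigenvalues of modulus `≥ ε`, orthogonality of the
eigenspaces gives `ε ‖x‖ ≤ ‖A x‖`. If `B x = 0` for some nonzero `x ∈ W`, then `A x = E x` and
`ε ‖x‖ ≤ ‖E x‖ < ε ‖x‖`, which is absurd. So `B` is injective on `W`, and `dim W ≤ rank B = r`.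
-/

universe u

open Module LinearMap

theorem Submodule.rank_le_rank_range_of_disjoint_ker {R : Type*} {M N : Type u} [Ring R]
    [AddCommGroup M] [Module R M] [AddCommGroup N] [Module R N] {W : Submodule R M}
    {f : M →ₗ[R] N} (h : Disjoint W (ker f)) : Module.rank R W ≤ Module.rank R (range f) := by
  rw [← rank_range_of_injective _ (injective_domRestrict_iff.2 h)]
  exact Submodule.rank_mono (range_comp_le_range _ _)

theorem LinearMap.IsSymmetric.mul_norm_le_norm_apply_of_mem_iSup_eigenspace
    {𝕜 E : Type*} [RCLike 𝕜] [NormedAddCommGroup E] [InnerProductSpace 𝕜 E]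
    {T : E →ₗ[𝕜] E} (hT : T.IsSymmetric) {c : ℝ} (hc : 0 ≤ c) {x : E}
    (hx : x ∈ ⨆ (μ : 𝕜) (_ : c ≤ ‖μ‖), End.eigenspace T μ) : c * ‖x‖ ≤ ‖T x‖ := by
  rw [iSup_subtype', Submodule.mem_iSup_iff_exists_finsupp] at hx
  obtain ⟨f, hf, rfl⟩ := hx
  let V : {μ : 𝕜 // c ≤ ‖μ‖} → Submodule 𝕜 E := fun μ ↦ End.eigenspace T μ
  have hV : OrthogonalFamily 𝕜 (fun μ ↦ V μ) (fun μ ↦ (V μ).subtypeₗᵢ) :=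
    hT.orthogonalFamily_eigenspaces.comp Subtype.coe_injective
  have hTf : ∀ μ, T (f μ) = (μ : 𝕜) • f μ := fun μ ↦ End.mem_eigenspace_iff.1 (hf μ)
  have hx : ‖f.sum fun _ v ↦ v‖ ^ 2 = ∑ μ ∈ f.support, ‖f μ‖ ^ 2 :=
    hV.norm_sum (fun μ ↦ ⟨f μ, hf μ⟩) f.support
  have hTx : ‖T (f.sum fun _ v ↦ v)‖ ^ 2 = ∑ μ ∈ f.support, ‖(μ : 𝕜) • f μ‖ ^ 2 := by
    simp only [Finsupp.sum, map_sum, hTf]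
    exact hV.norm_sum (fun μ ↦ ⟨(μ : 𝕜) • f μ, (V μ).smul_mem _ (hf μ)⟩) f.support
  refine le_of_pow_le_pow_left₀ two_ne_zero (norm_nonneg _) ?_
  rw [mul_pow, hx, hTx, Finset.mul_sum]
  gcongr with μ
  rw [norm_smul, mul_pow]
  gcongr
  exact μ.2

theorem ContinuousLinearMap.disjoint_ker_of_le_norm_add_apply {𝕜 E F : Type*}
    [NontriviallyNormedField 𝕜] [NormedAddCommGroup E] [NormedSpace 𝕜 E]
    [SeminormedAddCommGroup F] [NormedSpace 𝕜 F] {B D : E →L[𝕜] F} {W : Submodule 𝕜 E}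
    {c : ℝ} (hW : ∀ x ∈ W, c * ‖x‖ ≤ ‖(B + D) x‖) (hD : ‖D‖ < c) :
    Disjoint W (ker (B : E →ₗ[𝕜] F)) := by
  refine Submodule.disjoint_def.2 fun x hxW hxB ↦ ?_
  by_contra hx
  have hBx : B x = 0 := hxB
  have hx_pos : 0 < ‖x‖ := norm_pos_iff.2 hx
  have := calc
    c * ‖x‖ ≤ ‖D x‖ := by simpa [hBx] using hW x hxW
    _ ≤ ‖D‖ * ‖x‖ := D.le_opNorm x
    _ < c * ‖x‖ := by gcongr
  exact this.false

theorem stmt_2_general {H : Type*} [NormedAddCommGroup H] [InnerProductSpace ℂ H]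
    [CompleteSpace H]
    (A B E : H →L[ℂ] H) (hAsa : IsSelfAdjoint A)
    (r : ℕ) (hB : Module.rank ℂ ↥(LinearMap.range (B : H →ₗ[ℂ] H)) = r)
    (ε : ℝ) (hE : ‖E‖ < ε) (hABE : A = B + E) :
    Module.rank ℂ
      ↥(⨆ (μ : ℂ) (_ : ε ≤ ‖μ‖), Module.End.eigenspace (A : H →ₗ[ℂ] H) μ) ≤ r := by
  have hε : 0 ≤ ε := (norm_nonneg E).trans hE.le
  have hdisj : Disjoint (⨆ (μ : ℂ) (_ : ε ≤ ‖μ‖), End.eigenspace (A : H →ₗ[ℂ] H) μ)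
      (ker (B : H →ₗ[ℂ] H)) :=
    ContinuousLinearMap.disjoint_ker_of_le_norm_add_apply (fun _ hx ↦ hABE ▸
      hAsa.isSymmetric.mul_norm_le_norm_apply_of_mem_iSup_eigenspace hε hx) hE
  exact hB ▸ Submodule.rank_le_rank_range_of_disjoint_ker hdisj

/-- If a compact self-adjoint operator `A` on a separable Hilbert space is written
as `A = B + E` with `B` of finite rank `r` and `‖E‖ < ε`, then the total dimension of
the eigenspaces of `A` for eigenvalues of absolute value `≥ ε` is at most `r`. -/
theorem stmt_2 {H : Type*} [NormedAddCommGroup H] [InnerProductSpace ℂ H]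
    [CompleteSpace H] [TopologicalSpace.SeparableSpace H]
    (A B E : H →L[ℂ] H) (hA : IsCompactOperator A) (hAsa : IsSelfAdjoint A)
    (r : ℕ) (hB : Module.rank ℂ ↥(LinearMap.range (B : H →ₗ[ℂ] H)) = r)
    (ε : ℝ) (hε : 0 < ε) (hE : ‖E‖ < ε) (hABE : A = B + E) :
    Module.rank ℂ
      ↥(⨆ (μ : ℂ) (_ : ε ≤ ‖μ‖), Module.End.eigenspace (A : H →ₗ[ℂ] H) μ) ≤ r :=
  stmt_2_general A B E hAsa r hB ε hE hABE
end

section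
/- Let J = [[i, 0],[1, i]] and for b ∈ ℂ let B(b) = [[1, b],[0, −1]]. If S = [[1, 2i],[0,1]], then S·B(b)·J·S^{−1} = B(b)·J^{−1} for all b. Consequently, for any b_0,…,b_{m+1} ∈ ℂ, the equation ∏_{j=0}^{m+1} B(b_j) J = −1 holds if and only if ∏_{j=0}^{m+1} B(b_j) J^{−1} = −1. -/
open Complex Matrix

theorem list_prod_map_eq_neg_one_iff_of_conj {R ι : Type*} [Ring R] (u : Rˣ) {A A' : ι → R}
    (h : ∀ i, u * A i * ↑u⁻¹ = A' i) (l : List ι) :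
    (l.map A).prod = -1 ↔ (l.map A').prod = -1 := by
  have hprod : ConjAct.toConjAct u • (l.map A).prod = (l.map A').prod := by
    simp [List.smul_prod', Function.comp_def, ConjAct.units_smul_def, h]
  have hneg : ConjAct.toConjAct u • (-1 : R) = -1 := by
    rw [smul_neg, smul_one]
  rw [← hprod, ← smul_left_cancel_iff (ConjAct.toConjAct u), hneg]

local notation "M₂" => Matrix (Fin 2) (Fin 2) ℂ

def shear : M₂ˣ where
  val := !![1, 2*I; 0, 1]
  inv := !![1, -(2*I); 0, 1]
  val_inv := by simp [one_fin_two]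
  inv_val := by simp [one_fin_two]

lemma inv_J : (!![I, 0; 1, I] : M₂)⁻¹ = !![-I, 0; 1, -I] :=
  inv_eq_left_inv (by simp [one_fin_two])

lemma shear_conj_B_mul_J (b : ℂ) :
    (shear : M₂) * (!![1, b; 0, -1] * !![I, 0; 1, I]) * (shear⁻¹ : M₂ˣ)
      = !![1, b; 0, -1] * (!![I, 0; 1, I] : M₂)⁻¹ := by
  simp only [inv_J, shear, Units.inv_mk, mul_fin_two]
  ring_nf

/-- `J = [[i,0],[1,i]]`, `B(b) = [[1,b],[0,-1]]`, `S = [[1,2i],[0,1]]`. Then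
`S·B(b)·J·S⁻¹ = B(b)·J⁻¹` for all `b`, and consequently for any `b_0,…,b_{m+1}`,
`∏_j B(b_j) J = -1 ↔ ∏_j B(b_j) J⁻¹ = -1` (products taken in order `j = 0,…,m+1`). -/
theorem stmt_7 :
    (∀ b : ℂ,
      !![1, 2*I; 0, 1] * (!![1, b; 0, -1] * !![I, 0; 1, I]) * (!![1, 2*I; 0, 1])⁻¹
        = !![1, b; 0, -1] * (!![I, 0; 1, I] : Matrix (Fin 2) (Fin 2) ℂ)⁻¹) ∧
    ∀ (m : ℕ) (b : ℕ → ℂ),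
      ((List.range (m + 2)).map
          (fun j => !![1, b j; 0, -1] * (!![I, 0; 1, I] : Matrix (Fin 2) (Fin 2) ℂ))).prod
        = -1 ↔
      ((List.range (m + 2)).map
          (fun j => !![1, b j; 0, -1] * (!![I, 0; 1, I] : Matrix (Fin 2) (Fin 2) ℂ)⁻¹)).prod
        = -1 := by
  refine ⟨fun b => ?_, fun m b =>
    list_prod_map_eq_neg_one_iff_of_conj shear (fun j => shear_conj_B_mul_J (b j)) _⟩
  rw [← shear_conj_B_mul_J b, coe_units_inv]
  rfl
end

section
/- Let b ∈ ℝ satisfy the system P_{m−1}(b) = b and P_m(b) = 1, where P_r are the Chebyshev-like polynomials defined by P_0 = 1, P_1 = b, P_r = b P_{r−1} − P_{r−2}. Then P_{m+1}(b) = 0 and hence b = 2 cos(πk/(m+2)) for some odd integer k with 1 ≤ k ≤ m+1. -/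
/-!
`P_r` is the rescaled Chebyshev polynomial `S_r`, so `P_r(2 cos θ) sin θ = sin ((r + 1) θ)`.
The recurrence turns the two hypotheses into `P_{m+1}(b) = b - b = 0`, so `b / 2` is a root of
`U_{m+1}`, i.e. `b = 2 cos θ` with `θ = πk/(m+2)`, `1 ≤ k ≤ m + 1`. Since `(m + 1) θ = kπ - θ`
and `sin θ > 0`, this gives `P_m(b) = (-1)^(k+1)`, and `P_m(b) = 1` forces `k` to be odd.
-/

/-- The one-variable continuant specialization: `P_0 = 1`, `P_1 = b`,
`P_r = b·P_{r-1} - P_{r-2}`. -/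
def pcheb (b : ℝ) : ℕ → ℝ
  | 0 => 1
  | 1 => b
  | (r + 2) => b * pcheb b (r + 1) - pcheb b r

open Polynomial Polynomial.Chebyshev Real

theorem pcheb_eq_eval_S (b : ℝ) (r : ℕ) : pcheb b r = (S ℝ r).eval b := by
  induction r using Nat.twoStepInduction with
  | zero => simp [pcheb]
  | one => simp [pcheb]
  | more r ih₀ ih₁ =>
    rw [pcheb, ih₀, ih₁]
    push_cast
    simp [S_add_two]

theorem pcheb_eq_eval_U (b : ℝ) (r : ℕ) : pcheb b r = (U ℝ r).eval (b / 2) := by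
  rw [pcheb_eq_eval_S, S_eq_U_comp_half_mul_X, eval_comp]
  simp [div_eq_inv_mul]

theorem pcheb_two_mul_cos_mul_sin (θ : ℝ) (r : ℕ) :
    pcheb (2 * cos θ) r * sin θ = sin ((r + 1) * θ) := by
  rw [pcheb_eq_eval_S]
  exact_mod_cast S_two_mul_real_cos θ r

theorem exists_eq_two_mul_cos_of_pcheb_eq_zero {b : ℝ} {n : ℕ} (h : pcheb b n = 0) :
    ∃ k : ℕ, 0 < k ∧ k ≤ n ∧ b = 2 * cos (π * k / (n + 1)) := by
  rw [pcheb_eq_eval_U] at h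
  have hroot : b / 2 ∈ (U ℝ n).roots := (mem_roots (U_ne_zero ℝ n (by omega))).2 h
  rw [roots_U_real, Finset.mem_val, Finset.mem_image] at hroot
  obtain ⟨k, hk, hcos⟩ := hroot
  refine ⟨k + 1, k.succ_pos, Finset.mem_range.1 hk, ?_⟩
  push_cast
  rw [mul_comm π, hcos]
  ring

theorem pcheb_two_mul_cos_pi_mul_div {r k : ℕ} (hk₀ : 0 < k) (hk : k < r + 2) :
    pcheb (2 * cos (π * k / (r + 2))) r = (-1) ^ (k + 1) := by
  set θ := π * k / (r + 2)
  have hsin : 0 < sin θ := by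
    apply sin_pos_of_pos_of_lt_pi (by positivity)
    rw [div_lt_iff₀ (by positivity)]
    have : (k : ℝ) < r + 2 := by exact_mod_cast hk
    nlinarith [pi_pos]
  have hangle : ((r : ℝ) + 1) * θ = k * π - θ := by
    simp only [θ]
    field_simp
    ring
  have key := pcheb_two_mul_cos_mul_sin θ r
  rw [hangle, sin_nat_mul_pi_sub] at key
  refine mul_right_cancel₀ hsin.ne' (key.trans ?_)
  ring

/-- If `b ∈ ℝ` satisfies `P_{m-1}(b) = b` and `P_m(b) = 1`, then `P_{m+1}(b) = 0`,
hence `b = 2 cos(πk/(m+2))` for some odd `k` with `1 ≤ k ≤ m+1`. -/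
theorem stmt_11 (m : ℕ) (hm : 1 ≤ m) (b : ℝ)
    (h1 : pcheb b (m - 1) = b) (h2 : pcheb b m = 1) :
    pcheb b (m + 1) = 0 ∧
    ∃ k : ℕ, Odd k ∧ 1 ≤ k ∧ k ≤ m + 1 ∧
      b = 2 * Real.cos (Real.pi * k / (m + 2)) := by
  obtain ⟨n, rfl⟩ : ∃ n, m = n + 1 := ⟨m - 1, by omega⟩
  rw [Nat.add_sub_cancel] at h1
  have hzero : pcheb b (n + 2) = 0 := by
    rw [pcheb, h1, h2]
    ring
  refine ⟨hzero, ?_⟩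
  obtain ⟨k, hk₀, hk, rfl⟩ := exists_eq_two_mul_cos_of_pcheb_eq_zero hzero
  have hden : ((n + 2 : ℕ) : ℝ) + 1 = ((n + 1 : ℕ) : ℝ) + 2 := by push_cast; ring
  rw [hden] at h2 ⊢
  rw [pcheb_two_mul_cos_pi_mul_div hk₀ (by omega),
    neg_one_pow_eq_one_iff_even (by norm_num)] at h2
  exact ⟨k, Nat.not_even_iff_odd.1 (Nat.even_add_one.1 h2), hk₀, hk, rfl⟩
end

section
/- For a nonzero real number b, ∫_ℝ ( 2·𝟙[x² − 4b ≥ 0]/√|x² − 4b| − (1 + sign(log|x|))/|x| ) dx = −log|b|, where the integrand is defined for x ≠ 0, ±2√b and the integral is absolutely convergent. -/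
open MeasureTheory Real Set Filter Topology

/-!
The integrand is even, so it is enough to integrate over `(0, ∞)`, with `a = 4b`. There
`log (x + √(x² - a))` is a primitive of `1/√(x² - a)` on `{x² ≥ a}`, whose value at the left
end `√(max a 0)` of that set is `log √|a|` whatever the sign of `a`, and
`log (x + √(x² - a)) - log x → log 2` as `x → ∞`. Splitting `(0, ∞)` at a large `R`, the part
`(0, R]` contributes `log (R + √(R² - a)) - log √|a| - log R`. On `(R, ∞)` the integrand is
`1/√(x² - a) - 1/x`, which has the sign of `a`; being the derivative of a function with a
limit it is integrable there, with integral `log 2 - (log (R + √(R² - a)) - log R)`. Hence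
the integral over `(0, ∞)` is `log 2 - log (2√|b|) = -(log |b|)/2`.
-/

def HasIntegralOn (f : ℝ → ℝ) (s : Set ℝ) (I : ℝ) : Prop :=
  IntegrableOn f s ∧ ∫ x in s, f x = I

namespace HasIntegralOn

variable {f g : ℝ → ℝ} {s t : Set ℝ} {I J : ℝ}

lemma zero : HasIntegralOn (fun _ => 0) s 0 :=
  ⟨integrableOn_zero, integral_zero _ _⟩

lemma union (hf : HasIntegralOn f s I) (hg : HasIntegralOn f t J) (hst : Disjoint s t)
    (ht : MeasurableSet t) : HasIntegralOn f (s ∪ t) (I + J) :=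
  ⟨hf.1.union hg.1, by rw [setIntegral_union hst ht hf.1 hg.1, hf.2, hg.2]⟩

lemma sub (hf : HasIntegralOn f s I) (hg : HasIntegralOn g s J) :
    HasIntegralOn (fun x => f x - g x) s (I - J) :=
  ⟨hf.1.sub hg.1, by rw [integral_sub hf.1 hg.1, hf.2, hg.2]⟩

lemma congr_ae (hg : HasIntegralOn g s I) (h : f =ᵐ[volume.restrict s] g) :
    HasIntegralOn f s I :=
  ⟨hg.1.congr h.symm, by rw [integral_congr_ae h, hg.2]⟩

lemma congr (hg : HasIntegralOn g s I) (h : EqOn f g s) (hs : MeasurableSet s) :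
    HasIntegralOn f s I :=
  hg.congr_ae ((ae_restrict_iff' hs).2 (.of_forall h))

lemma congr_Ioo {a b : ℝ} (hg : HasIntegralOn g (Ioc a b) I) (h : EqOn f g (Ioo a b)) :
    HasIntegralOn f (Ioc a b) I := by
  refine hg.congr_ae ?_
  rw [← Measure.restrict_congr_set Ioo_ae_eq_Ioc]
  exact (ae_restrict_iff' measurableSet_Ioo).2 (.of_forall h)

lemma integrable_and_integral_of_even (heven : ∀ x, f (-x) = f x)
    (hf : HasIntegralOn f (Ioi 0) I) : Integrable f ∧ ∫ x, f x = 2 * I := by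
  have hIic : IntegrableOn f (Iic 0) := by
    rw [← Measure.map_neg_eq_self (volume : Measure ℝ),
      measurableEmbedding_neg.integrableOn_map_iff]
    simp_rw [Function.comp_def, heven, neg_preimage, neg_Iic, neg_zero]
    exact (integrableOn_Ici_iff_integrableOn_Ioi).2 hf.1
  refine ⟨?_, ?_⟩
  · rw [← integrableOn_univ, ← Iic_union_Ioi (a := 0)]
    exact hIic.union hf.1
  · have habs : ∀ x, f |x| = f x := fun x => by
      rcases abs_choice x with h | h <;> rw [h]
      exact heven x
    calc ∫ x, f x = ∫ x, f |x| := by simp_rw [habs]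
      _ = 2 * I := by rw [integral_comp_abs, hf.2]

end HasIntegralOn

lemma hasIntegralOn_Ioc_deriv_of_nonneg {g g' : ℝ → ℝ} {a b : ℝ} (hab : a ≤ b)
    (hcont : ContinuousOn g (Icc a b)) (hderiv : ∀ x ∈ Ioo a b, HasDerivAt g (g' x) x)
    (hpos : ∀ x ∈ Ioo a b, 0 ≤ g' x) : HasIntegralOn g' (Ioc a b) (g b - g a) := by
  have hint := intervalIntegral.integrableOn_deriv_of_nonneg hcont hderiv hpos
  refine ⟨hint, ?_⟩
  rw [← intervalIntegral.integral_of_le hab]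
  exact intervalIntegral.integral_eq_sub_of_hasDerivAt_of_le hab hcont hderiv
    ((intervalIntegrable_iff_integrableOn_Ioc_of_le hab).2 hint)

section LogAddSqrt

variable {a : ℝ}

lemma hasDerivAt_log_add_sqrt_sq_sub {x : ℝ} (hx : 0 < x) (hax : a < x ^ 2) :
    HasDerivAt (fun y => log (y + √(y ^ 2 - a))) (1 / √(x ^ 2 - a)) x := by
  have hsq : HasDerivAt (fun y => y ^ 2 - a) (2 * x) x := by
    simpa using (hasDerivAt_pow 2 x).sub_const a
  have hsum : HasDerivAt (fun y => y + √(y ^ 2 - a)) (1 + 2 * x / (2 * √(x ^ 2 - a))) x :=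
    (hasDerivAt_id' x).add (hsq.sqrt (sub_pos.2 hax).ne')
  have hs : 0 < √(x ^ 2 - a) := sqrt_pos.2 (sub_pos.2 hax)
  convert hsum.log (by positivity) using 1
  field_simp
  ring

lemma tendsto_log_add_sqrt_sq_sub_sub_log (a : ℝ) :
    Tendsto (fun x => log (x + √(x ^ 2 - a)) - log x) atTop (𝓝 (log 2)) := by
  have hlim : Tendsto (fun x : ℝ => log (1 + √(1 - a / x ^ 2))) atTop (𝓝 (log 2)) := by
    have h : Tendsto (fun x : ℝ => 1 - a / x ^ 2) atTop (𝓝 1) := by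
      have h0 : Tendsto (fun x : ℝ => a / x ^ 2) atTop (𝓝 0) :=
        tendsto_const_nhds.div_atTop (tendsto_pow_atTop two_ne_zero)
      simpa using h0.const_sub 1
    have := ((continuous_sqrt.tendsto 1).comp h).const_add 1
    rw [sqrt_one, one_add_one_eq_two] at this
    exact (continuousAt_log two_ne_zero).tendsto.comp this
  refine hlim.congr' ?_
  filter_upwards [eventually_gt_atTop 0] with x hx
  have hquot : 1 + √(1 - a / x ^ 2) = (x + √(x ^ 2 - a)) / x := by
    rw [one_sub_div (by positivity), sqrt_div' _ (by positivity), sqrt_sq hx.le]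
    field_simp
  rw [hquot, log_div (by positivity) hx.ne']

lemma hasIntegralOn_Ioc_one_div_sqrt_sq_sub (ha : a ≠ 0) {m R : ℝ} (hm : 0 ≤ m) (ham : a ≤ m ^ 2)
    (hmR : m ≤ R) : HasIntegralOn (fun x => 1 / √(x ^ 2 - a)) (Ioc m R)
      (log (R + √(R ^ 2 - a)) - log (m + √(m ^ 2 - a))) := by
  have hcont : ContinuousOn (fun y => log (y + √(y ^ 2 - a))) (Icc m R) := by
    refine ContinuousOn.log (by fun_prop) fun x hx hzero => ha ?_
    have hax : a ≤ x ^ 2 := ham.trans (pow_le_pow_left₀ hm hx.1 2)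
    obtain ⟨hx0, hs0⟩ := (add_eq_zero_iff_of_nonneg (hm.trans hx.1) (sqrt_nonneg _)).1 hzero
    have := sqrt_eq_zero'.1 hs0
    subst hx0
    linarith
  refine hasIntegralOn_Ioc_deriv_of_nonneg hmR hcont (fun x hx => ?_) (fun x _ => by positivity)
  exact hasDerivAt_log_add_sqrt_sq_sub (hm.trans_lt hx.1)
    (ham.trans_lt (pow_lt_pow_left₀ hx.1 hm two_ne_zero))

lemma hasIntegralOn_Ioi_one_div_sqrt_sq_sub_sub_one_div {R : ℝ} (hR : 0 < R) (haR : a < R ^ 2) :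
    HasIntegralOn (fun x => 1 / √(x ^ 2 - a) - 1 / x) (Ioi R)
      (log 2 - (log (R + √(R ^ 2 - a)) - log R)) := by
  have hderiv : ∀ x ∈ Ici R, HasDerivAt (fun y => log (y + √(y ^ 2 - a)) - log y)
      (1 / √(x ^ 2 - a) - 1 / x) x := fun x hx => by
    have hx0 : 0 < x := hR.trans_le hx
    have hax : a < x ^ 2 := haR.trans_le (pow_le_pow_left₀ hR.le hx 2)
    have h := (hasDerivAt_log_add_sqrt_sq_sub hx0 hax).sub (hasDerivAt_log hx0.ne')
    rwa [← one_div] at h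
  have hlim := tendsto_log_add_sqrt_sq_sub_sub_log a
  rcases le_total 0 a with ha | ha
  · have hpos : ∀ x ∈ Ioi R, 0 ≤ 1 / √(x ^ 2 - a) - 1 / x := fun x hx => by
      have hs : 0 < √(x ^ 2 - a) := sqrt_pos.2 (by nlinarith [mem_Ioi.1 hx])
      have hsx : √(x ^ 2 - a) ≤ x := (sqrt_le_left (hR.trans hx).le).2 (by linarith)
      exact sub_nonneg.2 (one_div_le_one_div_of_le hs hsx)
    exact ⟨integrableOn_Ioi_deriv_of_nonneg' hderiv hpos hlim,
      integral_Ioi_of_hasDerivAt_of_nonneg' hderiv hpos hlim⟩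
  · have hneg : ∀ x ∈ Ioi R, 1 / √(x ^ 2 - a) - 1 / x ≤ 0 := fun x hx => by
      have hx0 : 0 < x := hR.trans hx
      have hxs : x ≤ √(x ^ 2 - a) := (le_sqrt' hx0).2 (by linarith)
      exact sub_nonpos.2 (one_div_le_one_div_of_le hx0 hxs)
    exact ⟨integrableOn_Ioi_deriv_of_nonpos' hderiv hneg hlim,
      integral_Ioi_of_hasDerivAt_of_nonpos' hderiv hneg hlim⟩

lemma hasIntegralOn_Ioc_zero_theta_div_sqrt (ha : a ≠ 0) {R : ℝ} (hR : 0 ≤ R) (haR : a ≤ R ^ 2) :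
    HasIntegralOn (fun x => (if 0 ≤ x ^ 2 - a then 2 / √|x ^ 2 - a| else 0) / 2) (Ioc 0 R)
      (log (R + √(R ^ 2 - a)) - log √|a|) := by
  set m := √(max a 0) with hm_def
  have hm : 0 ≤ m := sqrt_nonneg _
  have hm2 : m ^ 2 = max a 0 := sq_sqrt (le_max_right a 0)
  have ham : a ≤ m ^ 2 := hm2 ▸ le_max_left a 0
  have hmR : m ≤ R := by
    rw [← sqrt_sq hR]
    exact sqrt_le_sqrt (max_le haR (sq_nonneg R))
  have hlow : m + √(m ^ 2 - a) = √|a| := by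
    rcases le_total 0 a with h | h
    · rw [hm2, max_eq_left h, sub_self, sqrt_zero, add_zero, abs_of_nonneg h, hm_def,
        max_eq_left h]
    · rw [hm2, max_eq_right h, zero_sub, abs_of_nonpos h, hm_def, max_eq_right h, sqrt_zero,
        zero_add]
  have hbelow : HasIntegralOn (fun x => (if 0 ≤ x ^ 2 - a then 2 / √|x ^ 2 - a| else 0) / 2)
      (Ioc 0 m) 0 := HasIntegralOn.zero.congr_Ioo fun x hx => by
    have hxa : x ^ 2 < a := by
      have := hm2 ▸ pow_lt_pow_left₀ hx.2 hx.1.le two_ne_zero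
      exact (lt_max_iff.1 this).resolve_right (by nlinarith [hx.1])
    simp only [if_neg (not_le.2 (sub_neg.2 hxa)), zero_div]
  rw [← Ioc_union_Ioc_eq_Ioc hm hmR, ← hlow, ← zero_add (log _ - _)]
  refine hbelow.union ((hasIntegralOn_Ioc_one_div_sqrt_sq_sub ha hm ham hmR).congr_Ioo
    fun x hx => ?_) (Ioc_disjoint_Ioc_of_le le_rfl) measurableSet_Ioc
  have hxa : 0 ≤ x ^ 2 - a := by nlinarith [hx.1]
  simp only [if_pos hxa, abs_of_nonneg hxa]
  ring

end LogAddSqrt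

lemma hasIntegralOn_Ioc_zero_one_add_sign_log_div {R : ℝ} (hR : 1 ≤ R) :
    HasIntegralOn (fun x => (1 + sign (log |x|)) / |x| / 2) (Ioc 0 R) (log R) := by
  have hbelow : HasIntegralOn (fun x => (1 + sign (log |x|)) / |x| / 2) (Ioc 0 1) 0 :=
    HasIntegralOn.zero.congr_Ioo fun x hx => by
    rw [abs_of_pos hx.1, sign_of_neg (log_neg hx.1 hx.2)]
    ring
  have hlog : HasIntegralOn (fun x => x⁻¹) (Ioc 1 R) (log R - log 1) :=
    hasIntegralOn_Ioc_deriv_of_nonneg hR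
      (continuousOn_log.mono fun x hx => (one_pos.trans_le hx.1).ne')
      (fun x hx => hasDerivAt_log (one_pos.trans hx.1).ne')
      (fun x hx => inv_nonneg.2 (zero_le_one.trans hx.1.le))
  rw [log_one, sub_zero] at hlog
  rw [← Ioc_union_Ioc_eq_Ioc zero_le_one hR, ← zero_add (log R)]
  refine hbelow.union (hlog.congr_Ioo fun x hx => ?_) (Ioc_disjoint_Ioc_of_le le_rfl)
    measurableSet_Ioc
  rw [abs_of_pos (one_pos.trans hx.1), sign_of_pos (log_pos hx.1)]
  ring

lemma hasIntegralOn_Ioi_zero_theta_sub_sign_log {a : ℝ} (ha : a ≠ 0) :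
    HasIntegralOn (fun x => ((if 0 ≤ x ^ 2 - a then 2 / √|x ^ 2 - a| else 0)
      - (1 + sign (log |x|)) / |x|) / 2) (Ioi 0) (log 2 - log √|a|) := by
  set R := √|a| + 1
  have hR : 1 ≤ R := le_add_of_nonneg_left (sqrt_nonneg _)
  have haR : a < R ^ 2 := by nlinarith [sq_sqrt (abs_nonneg a), le_abs_self a, sqrt_nonneg |a|]
  have hfinite := ((hasIntegralOn_Ioc_zero_theta_div_sqrt ha (by linarith) haR.le).sub
    (hasIntegralOn_Ioc_zero_one_add_sign_log_div hR)).congr (fun x _ => sub_div _ _ _)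
    measurableSet_Ioc
  rw [← Ioc_union_Ioi_eq_Ioi (zero_le_one.trans hR)]
  convert hfinite.union ((hasIntegralOn_Ioi_one_div_sqrt_sq_sub_sub_one_div (by linarith) haR).congr
    (fun x hx => ?_) measurableSet_Ioi) Ioc_disjoint_Ioi_same measurableSet_Ioi using 1
  · ring
  have hx1 : 1 < x := hR.trans_lt hx
  have hxa : 0 ≤ x ^ 2 - a := by nlinarith [mem_Ioi.1 hx]
  rw [if_pos hxa, abs_of_nonneg hxa, abs_of_pos (one_pos.trans hx1), sign_of_pos (log_pos hx1)]
  ring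

/-- For nonzero real `b`,
`∫ (2θ(x²−4b)/√‖x²−4b‖ − (1+sign(log‖x‖))/‖x‖) ‖dx‖ = −log‖b‖`, where `‖x‖ = |x|`,
`‖dx‖ = dx/2` is the normalized Haar measure on `ℝ`, and `θ(a) = 1` iff `a` is a
square (i.e. `a ≥ 0`); the integral is absolutely convergent. -/
theorem stmt_13 (b : ℝ) (hb : b ≠ 0) :
    Integrable (fun x : ℝ =>
      ((if 0 ≤ x ^ 2 - 4 * b then 2 / Real.sqrt |x ^ 2 - 4 * b| else 0)
        - (1 + Real.sign (Real.log |x|)) / |x|) / 2) ∧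
    ∫ x : ℝ,
      ((if 0 ≤ x ^ 2 - 4 * b then 2 / Real.sqrt |x ^ 2 - 4 * b| else 0)
        - (1 + Real.sign (Real.log |x|)) / |x|) / 2
      = - Real.log |b| := by
  obtain ⟨hint, hval⟩ := HasIntegralOn.integrable_and_integral_of_even
    (fun x => by simp only [neg_sq, abs_neg])
    (hasIntegralOn_Ioi_zero_theta_sub_sign_log (mul_ne_zero four_ne_zero hb))
  refine ⟨hint, hval.trans ?_⟩
  have hlog4 : log 4 = 2 * log 2 := by
    rw [show (4 : ℝ) = 2 ^ 2 by norm_num, log_pow, Nat.cast_ofNat]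
  rw [log_sqrt (abs_nonneg _), abs_mul, abs_of_pos four_pos,
    log_mul four_ne_zero (abs_ne_zero.2 hb), hlog4]
  ring
end

section
/- Let P be a monic cubic polynomial in z over ℂ. In the fraction field of the Weyl algebra ℂ[z, ∂] (equivalently, interpreted as an identity of well-defined commutators in ℂ[z,∂]), one has [2 log ∂ + log P, ∂P∂ + z] = 0; concretely, the commutators A := [2 log ∂, ∂P∂ + z] and B := [log P, ∂P∂ + z], each of which is a well-defined element of the Weyl algebra, satisfy A + B = 0. -/
/-! Write `H = ∂P∂ + z`. As `log P` commutes with `z`, it commutes with `P` and `P'`, so the Leibniz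
rule and `[∂, log P] = P'P⁻¹` give `[log P, ∂P∂] = -(∂P' + P'∂)`. As `log ∂` commutes with `∂`,
`[log ∂, H] = ∂[log ∂, P]∂ + ∂⁻¹`. Expanding `[log ∂, zⁿ]` by Leibniz from `[log ∂, z] = ∂⁻¹`, every
term of `∂[log ∂, P]∂` is absorbed by `∂∂⁻¹ = ∂⁻¹∂ = 1` except `∂z∂⁻¹z∂ = z²∂ + z - ∂⁻¹`, coming from
the leading monomial; hence `2∂[log ∂, P]∂ + 2∂⁻¹ = ∂P' + P'∂`, which is `A = -B`. -/

-- `⁅x, y⁆ = x * y - y * x`; the Lie ring structure of a ring is not a global instance.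
attribute [local instance] LieRing.ofAssociativeRing

section Commutators

variable {R : Type*} [Ring R]

theorem lie_mul (l x y : R) : ⁅l, x * y⁆ = ⁅l, x⁆ * y + x * ⁅l, y⁆ := by
  simp only [Ring.lie_def]; noncomm_ring

theorem mul_eq_mul_add_of_lie_eq {x y c : R} (h : ⁅x, y⁆ = c) : x * y = y * x + c := by
  rw [← h, Ring.lie_def]; abel

theorem lie_sandwich_of_commute {l d : R} (X : R) (h : Commute l d) :
    ⁅l, d * X * d⁆ = d * ⁅l, X⁆ * d := by
  rw [lie_mul, lie_mul, h.lie_eq]; noncomm_ring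

theorem lie_sandwich_of_lie_eq_mul_inv {l d P P' Pinv : R} (hlP : Commute l P)
    (hPP' : Commute P P') (hPinv : Pinv * P = 1) (hPinv' : P * Pinv = 1)
    (hdl : ⁅d, l⁆ = P' * Pinv) :
    ⁅l, d * P * d⁆ = -(d * P' + P' * d) := by
  have hld : ⁅l, d⁆ = -(P' * Pinv) := by rw [← hdl, lie_skew]
  calc ⁅l, d * P * d⁆ = -(P' * (Pinv * P) * d + d * (P * P') * Pinv) := by
        rw [lie_mul, lie_mul, hld, hlP.lie_eq]; noncomm_ring
    _ = -(d * P' + P' * d) := by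
        rw [hPinv, hPP'.eq, mul_assoc d (P' * P), mul_assoc P' P, hPinv']; noncomm_ring

end Commutators

section Weyl

variable {R : Type*} [Ring R] {z d dinv l : R}

theorem mul_sq_of_lie_eq_one (hdz : ⁅d, z⁆ = 1) : d * z ^ 2 = z ^ 2 * d + 2 * z := by
  have h := mul_eq_mul_add_of_lie_eq hdz
  calc d * z ^ 2 = (d * z) * z := by noncomm_ring
    _ = z ^ 2 * d + 2 * z := by rw [h, add_mul, mul_assoc, h]; noncomm_ring

variable (hdz : ⁅d, z⁆ = 1) (hd1 : d * dinv = 1) (hd2 : dinv * d = 1) (hlz : ⁅l, z⁆ = dinv)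
include hdz hd1 hd2 hlz

theorem sandwich_lie_sq : d * ⁅l, z ^ 2⁆ * d = 2 * (z * d) + 1 := by
  calc d * ⁅l, z ^ 2⁆ * d = (d * dinv) * z * d + d * z * (dinv * d) := by
        rw [pow_two, lie_mul, hlz]; noncomm_ring
    _ = 2 * (z * d) + 1 := by rw [hd1, hd2, mul_eq_mul_add_of_lie_eq hdz]; noncomm_ring

theorem sandwich_lie_cube : d * ⁅l, z ^ 3⁆ * d = 3 * (z ^ 2 * d) + 3 * z - dinv := by
  have h := mul_eq_mul_add_of_lie_eq hdz
  have hleft : d * z * dinv = z + dinv := by rw [h, add_mul, mul_assoc, hd1, mul_one, one_mul]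
  have hright : dinv * z * d = z - dinv := by
    rw [mul_assoc, show z * d = d * z - 1 by rw [h]; abel, mul_sub, ← mul_assoc, hd2, one_mul,
      mul_one]
  calc d * ⁅l, z ^ 3⁆ * d
      = (d * dinv) * z ^ 2 * d + (d * z * dinv) * z * d + d * z ^ 2 * (dinv * d) := by
        rw [pow_succ, lie_mul, pow_two, lie_mul, hlz]; noncomm_ring
    _ = 2 * (z ^ 2 * d) + dinv * z * d + d * z ^ 2 := by
        rw [hd1, hd2, hleft]; noncomm_ring
    _ = 3 * (z ^ 2 * d) + 3 * z - dinv := by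
        rw [hright, mul_sq_of_lie_eq_one hdz]; noncomm_ring

variable {K : Type*} [CommRing K] [Algebra K R] (a b c : K)

theorem sandwich_lie_cubic :
    d * ⁅l, z ^ 3 + a • z ^ 2 + b • z + algebraMap K R c⁆ * d
      = 3 * (z ^ 2 * d) + 3 * z - dinv + a • (2 * (z * d) + 1) + b • d := by
  rw [lie_add, lie_add, lie_add, lie_smul (R := K), lie_smul (R := K),
    (Algebra.commute_algebraMap_right c l).lie_eq, hlz, add_zero, mul_add, mul_add, add_mul,
    add_mul, mul_smul_comm, mul_smul_comm, smul_mul_assoc, smul_mul_assoc,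
    sandwich_lie_cube hdz hd1 hd2 hlz, sandwich_lie_sq hdz hd1 hd2 hlz, hd1, one_mul]

theorem two_mul_sandwich_lie_cubic :
    2 * (d * ⁅l, z ^ 3 + a • z ^ 2 + b • z + algebraMap K R c⁆ * d + dinv)
      = d * (3 * z ^ 2 + (2 * a) • z + algebraMap K R b)
        + (3 * z ^ 2 + (2 * a) • z + algebraMap K R b) * d := by
  calc _ = 2 * (3 * (z ^ 2 * d) + 3 * z + a • (2 * (z * d) + 1) + b • d) := by
        rw [sandwich_lie_cubic hdz hd1 hd2 hlz]; noncomm_ring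
    _ = 3 * (d * z ^ 2 + z ^ 2 * d) + (2 * a) • (d * z + z * d) + (2 * b) • d := by
        rw [mul_sq_of_lie_eq_one hdz, mul_eq_mul_add_of_lie_eq hdz]; noncomm_ring; module
    _ = _ := by simp only [Algebra.algebraMap_eq_smul_one]; noncomm_ring; module

end Weyl

/-- In (an extension of) the Weyl algebra `ℂ[z, ∂]` with `[∂, z] = 1`, for a monic
cubic `P(z) = z³ + a z² + b z + c`, the commutators `A = [2 log ∂, ∂P∂ + z]` and
`B = [log P, ∂P∂ + z]` satisfy `A + B = 0`, i.e. `[2 log ∂ + log P, ∂P∂ + z] = 0`.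
Here `ld` plays the role of `log ∂` (characterized by `[ld, ∂] = 0`, `[ld, z] = ∂⁻¹`)
and `lP` that of `log P` (characterized by `[lP, z] = 0`, `[∂, lP] = P′·P⁻¹`). -/
theorem stmt_18 {Ω : Type*} [Ring Ω] [Algebra ℂ Ω]
    (z d dinv ld lP P P' Pinv : Ω) (a b c : ℂ)
    (hP : P = z ^ 3 + a • z ^ 2 + b • z + algebraMap ℂ Ω c)
    (hP' : P' = 3 * z ^ 2 + (2 * a) • z + algebraMap ℂ Ω b)
    (hdz : d * z - z * d = 1)
    (hd1 : d * dinv = 1) (hd2 : dinv * d = 1)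
    (hPinv1 : P * Pinv = 1) (hPinv2 : Pinv * P = 1)
    (hldd : ld * d = d * ld)
    (hldz : ld * z - z * ld = dinv)
    (hlPz : lP * z = z * lP)
    (hlPd : d * lP - lP * d = P' * Pinv) :
    (2 * ld + lP) * (d * P * d + z) - (d * P * d + z) * (2 * ld + lP) = 0 := by
  have hPz : P ∈ Algebra.adjoin ℂ {z} := by rw [hP]; aesop
  have hP'z : P' ∈ Algebra.adjoin ℂ {z} := by rw [hP']; aesop
  rw [← Ring.lie_def] at hdz hldz hlPd
  have hB : ⁅lP, d * P * d⁆ = -(d * P' + P' * d) :=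
    lie_sandwich_of_lie_eq_mul_inv (Algebra.commute_of_mem_adjoin_singleton_of_commute hPz hlPz)
      (Algebra.commute_of_mem_adjoin_singleton_of_commute hP'z
        (Algebra.commute_of_mem_adjoin_self hPz).symm) hPinv2 hPinv1 hlPd
  have hAB : 2 * (d * ⁅ld, P⁆ * d + dinv) = d * P' + P' * d := by
    rw [hP, hP']; exact two_mul_sandwich_lie_cubic hdz hd1 hd2 hldz a b c
  change ⁅2 * ld + lP, d * P * d + z⁆ = 0
  rw [two_mul, add_lie, add_lie, lie_add, lie_add, lie_sandwich_of_commute P hldd, hldz, hB,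
    Commute.lie_eq hlPz, ← hAB]
  noncomm_ring
end

section
/- The discriminant in z of the quartic polynomial P_{t,x}(z) := (t − z²)² − 4z(z−1)(z−t)x equals 2^{12}·(x(x−1)t(t−1)(x−t))², for all t, x in any field of characteristic 0 (as a polynomial identity). -/
/-!
The discriminant of a quartic equals that of its resolvent cubic, whose roots are the three
pairings `r₀r₁ + r₂r₃, r₀r₂ + r₁r₃, r₀r₃ + r₁r₂` of its roots: their pairwise differences are
`(r₀ - r₃)(r₁ - r₂), (r₀ - r₂)(r₁ - r₃), (r₀ - r₁)(r₂ - r₃)`. By Vieta, the resolvent cubic of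
`P_{t,x}` has the same coefficients as `(y - 2t)(y - 4x + 2t)(y - 4xt + 2t)`, whose discriminant is
`(64·x(x-1)t(t-1)(x-t))²`.
-/

open Finset

section Discriminant

variable {R : Type*} [CommRing R]

/-- The discriminant of the polynomial `∏ i, (X - r i)`. -/
def rootDiscr {n : ℕ} (r : Fin n → R) : R := ∏ i, ∏ j ∈ Ioi i, (r i - r j) ^ 2

theorem rootDiscr_fin_three (a : Fin 3 → R) :
    rootDiscr a = ((a 0 - a 1) * (a 0 - a 2) * (a 1 - a 2)) ^ 2 := by
  simp [rootDiscr, Fin.prod_univ_succ, Fin.prod_Ioi_succ, mul_pow, mul_assoc]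

theorem rootDiscr_fin_four (r : Fin 4 → R) :
    rootDiscr r = ((r 0 - r 1) * (r 0 - r 2) * (r 0 - r 3) * (r 1 - r 2) * (r 1 - r 3) *
      (r 2 - r 3)) ^ 2 := by
  simp [rootDiscr, Fin.prod_univ_succ, Fin.prod_Ioi_succ, mul_pow, mul_assoc]

/-- The discriminant of `y³ - s₁y² + s₂y - s₃`. -/
def cubicDiscr (s₁ s₂ s₃ : R) : R :=
  s₁ ^ 2 * s₂ ^ 2 - 4 * s₂ ^ 3 - 4 * s₁ ^ 3 * s₃ + 18 * s₁ * s₂ * s₃ - 27 * s₃ ^ 2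

theorem rootDiscr_fin_three_eq_cubicDiscr (a : Fin 3 → R) :
    rootDiscr a =
      cubicDiscr (a 0 + a 1 + a 2) (a 0 * a 1 + a 0 * a 2 + a 1 * a 2) (a 0 * a 1 * a 2) := by
  rw [rootDiscr_fin_three, cubicDiscr]
  ring

theorem rootDiscr_fin_three_eq_of_esymm_eq {a : Fin 3 → R} {b₀ b₁ b₂ : R}
    (h₁ : a 0 + a 1 + a 2 = b₀ + b₁ + b₂)
    (h₂ : a 0 * a 1 + a 0 * a 2 + a 1 * a 2 = b₀ * b₁ + b₀ * b₂ + b₁ * b₂)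
    (h₃ : a 0 * a 1 * a 2 = b₀ * b₁ * b₂) :
    rootDiscr a = rootDiscr ![b₀, b₁, b₂] := by
  rw [rootDiscr_fin_three_eq_cubicDiscr, rootDiscr_fin_three_eq_cubicDiscr, h₁, h₂, h₃]
  rfl

def resolventRoots (r : Fin 4 → R) : Fin 3 → R :=
  ![r 0 * r 1 + r 2 * r 3, r 0 * r 2 + r 1 * r 3, r 0 * r 3 + r 1 * r 2]

theorem rootDiscr_resolventRoots (r : Fin 4 → R) :
    rootDiscr (resolventRoots r) = rootDiscr r := by
  have h₀₁ : r 0 * r 1 + r 2 * r 3 - (r 0 * r 2 + r 1 * r 3) = (r 0 - r 3) * (r 1 - r 2) := by ring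
  have h₀₂ : r 0 * r 1 + r 2 * r 3 - (r 0 * r 3 + r 1 * r 2) = (r 0 - r 2) * (r 1 - r 3) := by ring
  have h₁₂ : r 0 * r 2 + r 1 * r 3 - (r 0 * r 3 + r 1 * r 2) = (r 0 - r 1) * (r 2 - r 3) := by ring
  rw [rootDiscr_fin_three, rootDiscr_fin_four]
  simp only [resolventRoots, Matrix.cons_val, h₀₁, h₀₂, h₁₂]
  ring

theorem resolventRoots_esymm (r : Fin 4 → R) {e₁ e₂ e₃ e₄ : R}
    (he₁ : r 0 + r 1 + r 2 + r 3 = e₁)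
    (he₂ : r 0 * r 1 + r 0 * r 2 + r 0 * r 3 + r 1 * r 2 + r 1 * r 3 + r 2 * r 3 = e₂)
    (he₃ : r 0 * r 1 * r 2 + r 0 * r 1 * r 3 + r 0 * r 2 * r 3 + r 1 * r 2 * r 3 = e₃)
    (he₄ : r 0 * r 1 * r 2 * r 3 = e₄) :
    let θ := resolventRoots r
    θ 0 + θ 1 + θ 2 = e₂ ∧
      θ 0 * θ 1 + θ 0 * θ 2 + θ 1 * θ 2 = e₁ * e₃ - 4 * e₄ ∧
      θ 0 * θ 1 * θ 2 = e₁ ^ 2 * e₄ + e₃ ^ 2 - 4 * e₂ * e₄ := by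
  subst he₁ he₂ he₃ he₄
  simp only [resolventRoots, Matrix.cons_val]
  refine ⟨?_, ?_, ?_⟩ <;> ring

end Discriminant

theorem vieta_quartic {K : Type*} [Field K] [CharZero K] {e₁ e₂ e₃ e₄ : K} (r : Fin 4 → K)
    (h : ∀ z : K, z ^ 4 - e₁ * z ^ 3 + e₂ * z ^ 2 - e₃ * z + e₄ = ∏ i, (z - r i)) :
    r 0 + r 1 + r 2 + r 3 = e₁ ∧
      r 0 * r 1 + r 0 * r 2 + r 0 * r 3 + r 1 * r 2 + r 1 * r 3 + r 2 * r 3 = e₂ ∧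
      r 0 * r 1 * r 2 + r 0 * r 1 * r 3 + r 0 * r 2 * r 3 + r 1 * r 2 * r 3 = e₃ ∧
      r 0 * r 1 * r 2 * r 3 = e₄ := by
  have h₀ := h 0
  have h₁ := h 1
  have hm₁ := h (-1)
  have h₂ := h 2
  have hm₂ := h (-2)
  simp only [Fin.prod_univ_four] at h₀ h₁ hm₁ h₂ hm₂
  refine ⟨?_, ?_, ?_, ?_⟩
  · linear_combination
      (-1 / 6 : K) * h₁ + (1 / 6 : K) * hm₁ + (1 / 12 : K) * h₂ - (1 / 12 : K) * hm₂
  · linear_combination (-1 / 2 : K) * h₁ - (1 / 2 : K) * hm₁ + h₀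
  · linear_combination
      (2 / 3 : K) * h₁ - (2 / 3 : K) * hm₁ - (1 / 12 : K) * h₂ + (1 / 12 : K) * hm₂
  · linear_combination -h₀

/-- The discriminant in `z` of `P_{t,x}(z) = (t − z²)² − 4x·z(z−1)(z−t)` equals
`2¹²·(x(x−1)t(t−1)(x−t))²`: if `P_{t,x}` factors as `∏ (z − rᵢ)` over a field of
characteristic 0, then `∏_{i<j} (rᵢ − rⱼ)² = 2¹²·(x(x−1)t(t−1)(x−t))²`. -/
theorem stmt_19 {K : Type*} [Field K] [CharZero K] (t x : K) (r : Fin 4 → K)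
    (hfact : ∀ z : K,
      (t - z ^ 2) ^ 2 - 4 * x * (z * (z - 1) * (z - t)) = ∏ i, (z - r i)) :
    (∏ i : Fin 4, ∏ j ∈ Finset.Ioi i, (r i - r j) ^ 2)
      = 2 ^ 12 * (x * (x - 1) * t * (t - 1) * (x - t)) ^ 2 := by
  obtain ⟨he₁, he₂, he₃, he₄⟩ := vieta_quartic (e₁ := 4 * x) (e₂ := 4 * x * (1 + t) - 2 * t)
    (e₃ := 4 * x * t) (e₄ := t ^ 2) r fun z ↦ by rw [← hfact]; ring
  obtain ⟨hs₁, hs₂, hs₃⟩ := resolventRoots_esymm r he₁ he₂ he₃ he₄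
  calc rootDiscr r = rootDiscr (resolventRoots r) := (rootDiscr_resolventRoots r).symm
    _ = rootDiscr ![2 * t, 4 * x - 2 * t, 4 * x * t - 2 * t] :=
      rootDiscr_fin_three_eq_of_esymm_eq (by rw [hs₁]; ring) (by rw [hs₂]; ring)
        (by rw [hs₃]; ring)
    _ = 2 ^ 12 * (x * (x - 1) * t * (t - 1) * (x - t)) ^ 2 := by
      simp only [rootDiscr_fin_three, Matrix.cons_val]
      ring
end
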